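/- arXiv:2112.00298 — 5 statements merged into one kernel-verified Lean document; each statement's English description precedes it below -/
import Mathlib

section
/- For s ∈ ℝ^d, there exists τ ∈ ℝ such that ∑_{i=1}^d ([s_i/2 − τ]_+)^2 = 1, i.e., the 1.5-entmax transformation is well defined. -/
/-!
The map `τ ↦ ∑ i, [s i - τ]₊²` is continuous, vanishes once `τ` exceeds every `s i`, and is at
least `c` at `τ = s i₀ - √c`; the intermediate value theorem gives a `τ` where it equals `c`.
-/

open Finset

section SumSqPosPart

variable {ι : Type*} [Fintype ι]

theorem continuous_sum_sq_max_sub_zero (s : ι → ℝ) :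
    Continuous fun τ : ℝ => ∑ i, max (s i - τ) 0 ^ 2 := by
  fun_prop

theorem sum_sq_max_sub_zero_eq_zero {s : ι → ℝ} {τ : ℝ} (hτ : ∀ i, s i ≤ τ) :
    ∑ i, max (s i - τ) 0 ^ 2 = 0 :=
  sum_eq_zero fun i _ => by rw [max_eq_right (by linarith [hτ i])]; norm_num

theorem sq_sub_le_sum_sq_max_sub_zero (s : ι → ℝ) (i : ι) (τ : ℝ) :
    max (s i - τ) 0 ^ 2 ≤ ∑ j, max (s j - τ) 0 ^ 2 :=
  single_le_sum (f := fun j => max (s j - τ) 0 ^ 2) (fun _ _ => sq_nonneg _) (mem_univ i)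

theorem exists_sum_sq_max_sub_zero_eq [Nonempty ι] (s : ι → ℝ) {c : ℝ} (hc : 0 ≤ c) :
    ∃ τ, ∑ i, max (s i - τ) 0 ^ 2 = c := by
  obtain ⟨i₀⟩ := ‹Nonempty ι›
  obtain ⟨iₘ, hiₘ⟩ := Finite.exists_max s
  have h_low : c ≤ ∑ i, max (s i - (s i₀ - √c)) 0 ^ 2 := by
    calc c = max (s i₀ - (s i₀ - √c)) 0 ^ 2 := by
          rw [sub_sub_cancel, max_eq_left (Real.sqrt_nonneg c), Real.sq_sqrt hc]
      _ ≤ _ := sq_sub_le_sum_sq_max_sub_zero s i₀ _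
  have h_high : ∑ i, max (s i - s iₘ) 0 ^ 2 ≤ c := by
    rw [sum_sq_max_sub_zero_eq_zero hiₘ]; exact hc
  obtain ⟨τ, -, hτ⟩ := intermediate_value_uIcc
    (continuous_sum_sq_max_sub_zero s).continuousOn (Set.mem_uIcc.mpr (.inr ⟨h_high, h_low⟩))
  exact ⟨τ, hτ⟩

end SumSqPosPart

/-- Existence of the 1.5-entmax threshold: for `s : Fin d → ℝ` with `d ≥ 1`,
there exists `τ` with `∑ i, (max (s i / 2 - τ) 0)^2 = 1`. -/
theorem entmax_threshold_exists (d : ℕ) (hd : 0 < d) (s : Fin d → ℝ) :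
    ∃ τ : ℝ, ∑ i, (max (s i / 2 - τ) 0) ^ 2 = 1 := by
  have : Nonempty (Fin d) := Fin.pos_iff_nonempty.mp hd
  exact exists_sum_sq_max_sub_zero_eq (fun i => s i / 2) zero_le_one
end

section
/- Let s ∈ ℝ^d with sorted coordinates s_[d] ≤ ... ≤ s_[1], and let τ be the unique threshold of 1.5-entmax(s). If the smallest coordinate receives positive probability, i.e., s_[d]/2 > τ, then τ = M − sqrt((1 − S)/d), where M = (1/d)∑_i s_i/2 and S = ∑_i (s_i/2 − M)^2, and moreover S ≤ 1. -/
/-- If all coordinates are active (the smallest one receives positive probability),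
the 1.5-entmax threshold has the closed form `τ = M − √((1 − S)/d)`,
where `M` is the mean and `S` the unnormalized variance of the halved scores;
moreover `S ≤ 1`. -/
theorem entmax_threshold_closed_form (d : ℕ) (hd : 0 < d) (s : Fin d → ℝ) (τ : ℝ)
    (hτ : ∑ i, (max (s i / 2 - τ) 0) ^ 2 = 1)
    (hactive : ∀ i, s i / 2 > τ) :
    τ = (∑ i, s i / 2) / d -
        Real.sqrt ((1 - ∑ i, (s i / 2 - (∑ j, s j / 2) / d) ^ 2) / d) ∧
      ∑ i, (s i / 2 - (∑ j, s j / 2) / d) ^ 2 ≤ 1 := by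
  have hd0 : (0:ℝ) < d := Nat.cast_pos.mpr hd
  set x : Fin d → ℝ := fun i => s i / 2 with hx
  set T : ℝ := ∑ i, x i with hT
  set M : ℝ := T / d with hM
  have hτ' : ∑ i, (x i - τ) ^ 2 = 1 := by
    rw [← hτ]
    refine Finset.sum_congr rfl fun i _ => ?_
    rw [max_eq_left (le_of_lt (sub_pos.mpr (hactive i)))]
  have hsumdiff : ∑ i, (x i - M) = 0 := by
    rw [Finset.sum_sub_distrib, Finset.sum_const, Finset.card_univ, Fintype.card_fin]
    rw [nsmul_eq_mul, hM, hT, mul_div_assoc', mul_div_cancel_left₀ _ hd0.ne', sub_self]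
  have hexp : ∑ i, (x i - τ) ^ 2 = (∑ i, (x i - M) ^ 2) + d * (M - τ) ^ 2 := by
    have : ∀ i, (x i - τ)^2 = (x i - M)^2 + 2*(M - τ)*(x i - M) + (M - τ)^2 := by
      intro i; ring
    rw [Finset.sum_congr rfl fun i _ => this i]
    rw [Finset.sum_add_distrib, Finset.sum_add_distrib, ← Finset.mul_sum, hsumdiff,
      Finset.sum_const, Finset.card_univ, Fintype.card_fin, nsmul_eq_mul]
    ring
  set S : ℝ := ∑ i, (x i - M) ^ 2 with hS
  have key : S + d * (M - τ) ^ 2 = 1 := by rw [← hexp, hτ']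
  have hSle : S ≤ 1 := by nlinarith [sq_nonneg (M - τ)]
  have hMτ : τ < M := by
    have : τ * d < T := by
      rw [hT]
      calc τ * d = ∑ _i : Fin d, τ := by
            rw [Finset.sum_const, Finset.card_univ, Fintype.card_fin, nsmul_eq_mul]; ring
        _ < ∑ i, x i := Finset.sum_lt_sum_of_nonempty (Finset.univ_nonempty_iff.mpr
              ⟨⟨0, hd⟩⟩) fun i _ => hactive i
    rw [hM]
    exact (lt_div_iff₀ hd0).mpr this
  have hsq : (M - τ) ^ 2 = (1 - S) / d := by field_simp; linarith
  have hsqrt : Real.sqrt ((1 - S) / d) = M - τ := by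
    rw [← hsq]
    exact Real.sqrt_sq (by linarith)
  refine ⟨?_, hSle⟩
  rw [hsqrt]; ring
end

section
/- Appending a sufficiently small dummy coordinate does not change 1.5-entmax: let s ∈ ℝ^d with p = 1.5-entmax(s), and let s' ∈ ℝ^{d+1} agree with s on the first d coordinates. If s'_{d+1}/2 ≤ s_[d]/2 − 1, where s_[d] = min_i s_i, then 1.5-entmax(s') equals p on the first d coordinates and assigns probability 0 to coordinate d+1. -/
/-!
The 1.5-entmax threshold `τ` is unique because the mass `∑ᵢ ([sᵢ/2 - τ]₊)²` is strictly
decreasing in `τ` wherever it is positive. Every term of a mass equal to `1` is at most `1`,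
so `sᵢ/2 - τ' ≤ 1` for every coordinate of `s'`; taken at any of the first `d` coordinates
this gives `τ' ≥ min s / 2 - 1 ≥ s'_{d+1}/2`, so the dummy coordinate carries no mass. The mass
of `s'` at `τ'` is then the mass of `s` at `τ'`, and uniqueness forces `τ' = τ`.
-/

open Finset

noncomputable def entmaxMass {ι : Type*} [Fintype ι] (f : ι → ℝ) (τ : ℝ) : ℝ :=
  ∑ i, (max (f i - τ) 0) ^ 2

section

variable {ι : Type*} [Fintype ι]

lemma entmaxMass_lt_of_lt (f : ι → ℝ) {a b : ℝ} (hab : a < b) (hb : entmaxMass f b ≠ 0) :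
    entmaxMass f b < entmaxMass f a := by
  obtain ⟨i, -, hi⟩ := exists_ne_zero_of_sum_ne_zero hb
  have hib : 0 < f i - b := by
    by_contra! h
    simp [max_eq_right h] at hi
  refine sum_lt_sum (fun j _ => ?_) ⟨i, mem_univ i, ?_⟩
  · exact pow_le_pow_left₀ (le_max_right _ _) (max_le_max (by linarith) le_rfl) 2
  · rw [max_eq_left hib.le, max_eq_left (by linarith)]
    exact pow_lt_pow_left₀ (by linarith) hib.le two_ne_zero

lemma eq_of_entmaxMass_eq_one (f : ι → ℝ) {a b : ℝ}
    (ha : entmaxMass f a = 1) (hb : entmaxMass f b = 1) : a = b := by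
  refine le_antisymm (not_lt.1 fun hba => ?_) (not_lt.1 fun hab => ?_)
  · have := entmaxMass_lt_of_lt f hba (by rw [ha]; exact one_ne_zero)
    linarith
  · have := entmaxMass_lt_of_lt f hab (by rw [hb]; exact one_ne_zero)
    linarith

lemma sub_le_one_of_entmaxMass_eq_one (f : ι → ℝ) {τ : ℝ} (h : entmaxMass f τ = 1) (i : ι) :
    f i - τ ≤ 1 := by
  have hterm : (max (f i - τ) 0) ^ 2 ≤ 1 :=
    h ▸ single_le_sum (f := fun j => (max (f j - τ) 0) ^ 2) (fun j _ => sq_nonneg _)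
      (mem_univ i)
  have hmax : max (f i - τ) 0 ≤ 1 := by
    nlinarith [le_max_right (f i - τ) 0]
  exact (le_max_left _ _).trans hmax

end

lemma entmaxMass_fin_succ_of_max_last_eq_zero {d : ℕ} (f : Fin (d + 1) → ℝ) {τ : ℝ}
    (hlast : max (f (Fin.last d) - τ) 0 = 0) :
    entmaxMass f τ = entmaxMass (fun i : Fin d => f i.castSucc) τ := by
  simp only [entmaxMass, Fin.sum_univ_castSucc, hlast]
  ring

/-- Dummy padding: appending a coordinate `s'_{d+1}` with
`s'_{d+1}/2 ≤ min_i s_i / 2 − 1` does not change the 1.5-entmax output: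
the first `d` probabilities are unchanged and the new coordinate gets probability 0. -/
theorem entmax_dummy_padding (d : ℕ) (hd : 0 < d) (s : Fin d → ℝ)
    (s' : Fin (d + 1) → ℝ) (hext : ∀ i : Fin d, s' i.castSucc = s i)
    (hdummy : haveI : Nonempty (Fin d) := Fin.pos_iff_nonempty.mp hd
      s' (Fin.last d) / 2 ≤ (Finset.univ.inf' Finset.univ_nonempty s) / 2 - 1)
    (τ τ' : ℝ)
    (hτ : ∑ i, (max (s i / 2 - τ) 0) ^ 2 = 1)
    (hτ' : ∑ i, (max (s' i / 2 - τ') 0) ^ 2 = 1) :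
    (∀ i : Fin d,
        (max (s' i.castSucc / 2 - τ') 0) ^ 2 = (max (s i / 2 - τ) 0) ^ 2) ∧
      (max (s' (Fin.last d) / 2 - τ') 0) ^ 2 = 0 := by
  let i₀ : Fin d := ⟨0, hd⟩
  have hτ'_ge : s' (Fin.last d) / 2 ≤ τ' := by
    have hi₀ := sub_le_one_of_entmaxMass_eq_one (fun i => s' i / 2) hτ' i₀.castSucc
    have hmin := inf'_le s (mem_univ i₀)
    simp only [hext] at hi₀
    linarith
  have hlast : max (s' (Fin.last d) / 2 - τ') 0 = 0 := max_eq_right (by linarith)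
  have hτ's : entmaxMass (fun i => s i / 2) τ' = 1 := by
    rw [← hτ', ← entmaxMass, entmaxMass_fin_succ_of_max_last_eq_zero _ hlast]
    simp only [hext]
  have heq : τ' = τ := eq_of_entmaxMass_eq_one _ hτ's hτ
  exact ⟨fun i => by rw [hext i, heq], by rw [hlast]; ring⟩
end

section
/- Exact padding threshold: let s ∈ ℝ^d with p = 1.5-entmax(s) satisfying p_i > 0 for all i, and let s' ∈ ℝ^{d+1} agree with s on the first d coordinates. Define τ_d = M − sqrt((1−S)/d) where M and S are the mean and unnormalized variance of the coordinates s_i/2 (this is well-defined since S ≤ 1 under full support). Then 1.5-entmax(s') restricted to the first d coordinates equals p and the (d+1)-st probability is 0 if and only if s'_{d+1} ≤ 2τ_d. -/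
/-!
The threshold equation `∑ i, [a i - t]₊² = 1` has at most one solution, since its left side
is strictly decreasing in `t` as long as some `a i` exceeds `t`. Padding `s` with a score
`≤ 2τ` keeps `τ` a solution, so `τ' = τ`; conversely, equal probabilities on the first `d`
coordinates make `τ'` a solution of the equation for `s`, so again `τ' = τ`. Under full support
`τ` solves the quadratic `∑ i, (s i / 2 - t)² = 1 = S + d (M - t)²`, and `τ < M` selects the
root `M - √((1 - S) / d)`.
-/

open Finset

lemma sq_max_sub_zero_le_of_le {a t u : ℝ} (h : t ≤ u) :
    max (a - u) 0 ^ 2 ≤ max (a - t) 0 ^ 2 :=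
  pow_le_pow_left₀ (le_max_right _ _) (max_le_max_right 0 (by linarith)) 2

lemma sq_max_sub_zero_lt_of_lt {a t u : ℝ} (h : t < u) (ha : t < a) :
    max (a - u) 0 ^ 2 < max (a - t) 0 ^ 2 := by
  rw [max_eq_left (sub_nonneg.2 ha.le)]
  exact pow_lt_pow_left₀ (max_lt (by linarith) (by linarith)) (le_max_right _ _) two_ne_zero

lemma sq_max_sub_zero_eq_zero_iff {a t : ℝ} : max (a - t) 0 ^ 2 = 0 ↔ a ≤ t := by
  rw [sq_eq_zero_iff, max_eq_right_iff, sub_nonpos]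

section Threshold

variable {ι : Type*} [Fintype ι] (a : ι → ℝ)

lemma sum_sq_max_sub_zero_lt_of_lt {t u : ℝ} (h : t < u) {j : ι} (hj : t < a j) :
    ∑ i, max (a i - u) 0 ^ 2 < ∑ i, max (a i - t) 0 ^ 2 :=
  sum_lt_sum (fun _ _ => sq_max_sub_zero_le_of_le h.le)
    ⟨j, mem_univ j, sq_max_sub_zero_lt_of_lt h hj⟩

lemma exists_lt_of_sum_sq_max_sub_zero_eq_one {t : ℝ}
    (h : ∑ i, max (a i - t) 0 ^ 2 = 1) : ∃ j, t < a j := by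
  by_contra! hle
  simp [sq_max_sub_zero_eq_zero_iff.2 (hle _)] at h

lemma eq_of_sum_sq_max_sub_zero_eq_one {t u : ℝ}
    (ht : ∑ i, max (a i - t) 0 ^ 2 = 1) (hu : ∑ i, max (a i - u) 0 ^ 2 = 1) : t = u := by
  rcases lt_trichotomy t u with h | h | h
  · obtain ⟨j, hj⟩ := exists_lt_of_sum_sq_max_sub_zero_eq_one a ht
    linarith [sum_sq_max_sub_zero_lt_of_lt a h hj]
  · exact h
  · obtain ⟨j, hj⟩ := exists_lt_of_sum_sq_max_sub_zero_eq_one a hu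
    linarith [sum_sq_max_sub_zero_lt_of_lt a h hj]

lemma sum_sq_sub_eq_sum_sq_sub_mean_add (t : ℝ) :
    ∑ i, (a i - t) ^ 2 =
      ∑ i, (a i - (∑ j, a j) / Fintype.card ι) ^ 2 +
        Fintype.card ι * ((∑ j, a j) / Fintype.card ι - t) ^ 2 := by
  set n : ℝ := (Fintype.card ι : ℝ)
  set M := (∑ j, a j) / n
  have hsum : ∑ j, a j = n * M := by
    rcases isEmpty_or_nonempty ι with hι | hι
    · simp [n]
    · rw [mul_div_cancel₀ _ (by positivity)]
  have hdiff : ∑ i, (a i - t) ^ 2 - ∑ i, (a i - M) ^ 2 =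
      ∑ i, (2 * (M - t) * a i - (M ^ 2 - t ^ 2)) := by
    rw [← sum_sub_distrib]
    exact sum_congr rfl fun i _ => by ring
  rw [sum_sub_distrib, ← mul_sum, hsum, sum_const, card_univ, nsmul_eq_mul] at hdiff
  linarith

lemma eq_mean_sub_sqrt_of_sum_sq_sub_eq_one {t : ℝ} (hpos : ∀ i, t < a i)
    (h : ∑ i, (a i - t) ^ 2 = 1) :
    t = (∑ j, a j) / Fintype.card ι -
      Real.sqrt ((1 - ∑ i, (a i - (∑ j, a j) / Fintype.card ι) ^ 2) / Fintype.card ι) := by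
  have hι : Nonempty ι := by
    by_contra! hι
    simp at h
  set n : ℝ := (Fintype.card ι : ℝ)
  set M := (∑ j, a j) / n
  have hn : 0 < n := by positivity
  have htM : t < M := by
    rw [lt_div_iff₀ hn, mul_comm]
    simpa [n] using sum_lt_sum_of_nonempty univ_nonempty fun i _ => hpos i
  have hvar : (1 - ∑ i, (a i - M) ^ 2) / n = (M - t) ^ 2 := by
    rw [← h, sum_sq_sub_eq_sum_sq_sub_mean_add a t, add_sub_cancel_left,
      mul_div_cancel_left₀ _ hn.ne']
  rw [hvar, Real.sqrt_sq (by linarith)]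
  ring

end Threshold

theorem entmax_padding_iff_general (d : ℕ) (s : Fin d → ℝ)
    (s' : Fin (d + 1) → ℝ) (hext : ∀ i : Fin d, s' i.castSucc = s i)
    (τ τ' : ℝ)
    (hτ : ∑ i, (max (s i / 2 - τ) 0) ^ 2 = 1)
    (hactive : ∀ i, s i / 2 > τ)
    (hτ' : ∑ i, (max (s' i / 2 - τ') 0) ^ 2 = 1) :
    ((∀ i : Fin d,
        (max (s' i.castSucc / 2 - τ') 0) ^ 2 = (max (s i / 2 - τ) 0) ^ 2) ∧
      (max (s' (Fin.last d) / 2 - τ') 0) ^ 2 = 0) ↔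
      s' (Fin.last d) ≤
        2 * ((∑ i, s i / 2) / d -
          Real.sqrt ((1 - ∑ i, (s i / 2 - (∑ j, s j / 2) / d) ^ 2) / d)) := by
  have hsupp : ∑ i, (s i / 2 - τ) ^ 2 = 1 := by
    rw [← hτ]
    exact sum_congr rfl fun i _ => by rw [max_eq_left (sub_nonneg.2 (hactive i).le)]
  have hthreshold := eq_mean_sub_sqrt_of_sum_sq_sub_eq_one (fun i => s i / 2) hactive hsupp
  rw [Fintype.card_fin] at hthreshold
  rw [← hthreshold]
  constructor
  · rintro ⟨hfirst, hlast⟩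
    have hτ's : ∑ i, max (s i / 2 - τ') 0 ^ 2 = 1 := by
      rw [← hτ]
      exact sum_congr rfl fun i _ => by simpa only [hext] using hfirst i
    obtain rfl := eq_of_sum_sq_max_sub_zero_eq_one (fun i => s i / 2) hτ's hτ
    linarith [sq_max_sub_zero_eq_zero_iff.1 hlast]
  · intro hle
    have hlast : max (s' (Fin.last d) / 2 - τ) 0 ^ 2 = 0 :=
      sq_max_sub_zero_eq_zero_iff.2 (by linarith)
    have hτs' : ∑ i, max (s' i / 2 - τ) 0 ^ 2 = 1 := by
      rw [Fin.sum_univ_castSucc, hlast, add_zero]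
      simpa only [hext] using hτ
    obtain rfl := eq_of_sum_sq_max_sub_zero_eq_one (fun i => s' i / 2) hτ' hτs'
    exact ⟨fun i => by rw [hext], hlast⟩

/-- Exact padding threshold: under full support of `1.5-entmax(s)`, padding with a
coordinate `s'_{d+1}` leaves the first `d` probabilities unchanged and assigns
probability `0` to the new coordinate iff `s'_{d+1} ≤ 2 τ_d`, where
`τ_d = M − √((1 − S)/d)`. -/
theorem entmax_padding_iff (d : ℕ) (hd : 0 < d) (s : Fin d → ℝ)
    (s' : Fin (d + 1) → ℝ) (hext : ∀ i : Fin d, s' i.castSucc = s i)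
    (τ τ' : ℝ)
    (hτ : ∑ i, (max (s i / 2 - τ) 0) ^ 2 = 1)
    (hactive : ∀ i, s i / 2 > τ)
    (hτ' : ∑ i, (max (s' i / 2 - τ') 0) ^ 2 = 1) :
    ((∀ i : Fin d,
        (max (s' i.castSucc / 2 - τ') 0) ^ 2 = (max (s i / 2 - τ) 0) ^ 2) ∧
      (max (s' (Fin.last d) / 2 - τ') 0) ^ 2 = 0) ↔
      s' (Fin.last d) ≤
        2 * ((∑ i, s i / 2) / d -
          Real.sqrt ((1 - ∑ i, (s i / 2 - (∑ j, s j / 2) / d) ^ 2) / d)) :=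
  entmax_padding_iff_general d s s' hext τ τ' hτ hactive hτ'
end

section
/- For d = 2 with s = (a, b) and a ≥ b: if a − b ≥ 2 then 1.5-entmax(s) = (1, 0); if a − b < 2 then both coordinates are positive, with p_1 = (u/2 + v)^2 and p_2 = (−u/2 + v)^2 where u = (a−b)/2 and v = sqrt(2 − u^2)/2. -/
/-- Two-coordinate case of 1.5-entmax: for `s = (a, b)` with `a ≥ b`, if
`a − b ≥ 2` the output is `(1, 0)`; if `a − b < 2` both coordinates are active,
equal to `(u/2 + v)^2` and `(−u/2 + v)^2` with `u = (a−b)/2`, `v = √(2 − u²)/2`. -/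
theorem entmax_two_coords (a b : ℝ) (hab : a ≥ b) (τ : ℝ)
    (hτ : (max (a / 2 - τ) 0) ^ 2 + (max (b / 2 - τ) 0) ^ 2 = 1) :
    (a - b ≥ 2 →
      (max (a / 2 - τ) 0) ^ 2 = 1 ∧ (max (b / 2 - τ) 0) ^ 2 = 0) ∧
    (a - b < 2 →
      (max (a / 2 - τ) 0) ^ 2 =
          ((a - b) / 2 / 2 + Real.sqrt (2 - ((a - b) / 2) ^ 2) / 2) ^ 2 ∧
        (max (b / 2 - τ) 0) ^ 2 =
          (-((a - b) / 2) / 2 + Real.sqrt (2 - ((a - b) / 2) ^ 2) / 2) ^ 2) := by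
  constructor
  · intro h
    have hb : b / 2 - τ ≤ 0 := by
      by_contra hb
      push_neg at hb
      have h2 : max (a / 2 - τ) 0 = a / 2 - τ := max_eq_left (by linarith)
      have h3 : max (b / 2 - τ) 0 = b / 2 - τ := max_eq_left (le_of_lt hb)
      rw [h2, h3] at hτ
      nlinarith
    have h3 : max (b / 2 - τ) 0 = 0 := max_eq_right hb
    rw [h3] at hτ ⊢
    constructor
    · nlinarith
    · norm_num
  · intro h
    set u : ℝ := (a - b) / 2 with hu
    have hu0 : 0 ≤ u := by simp [hu]; linarith
    have hu1 : u < 1 := by simp [hu]; linarith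
    have h2u : (0:ℝ) < 2 - u ^ 2 := by nlinarith
    set v : ℝ := Real.sqrt (2 - u ^ 2) / 2 with hv
    have hvpos : 0 < v := by
      have := Real.sqrt_pos.mpr h2u
      simp [hv]; linarith
    have hv2 : (2 * v) ^ 2 = 2 - u ^ 2 := by
      have := Real.sq_sqrt (le_of_lt h2u)
      simp [hv]; nlinarith
    -- b/2 - τ > 0
    have hbpos : 0 < b / 2 - τ := by
      by_contra hb
      push_neg at hb
      have h3 : max (b / 2 - τ) 0 = 0 := max_eq_right hb
      rw [h3] at hτ
      have hm : max (a / 2 - τ) 0 = 1 := by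
        have h0 : 0 ≤ max (a / 2 - τ) 0 := le_max_right _ _
        nlinarith
      have ha1 : a / 2 - τ = 1 := by
        rcases max_cases (a / 2 - τ) 0 with ⟨he, _⟩ | ⟨he, _⟩ <;> rw [he] at hm <;> linarith
      have : b / 2 - τ = 1 - u := by simp [hu]; linarith
      linarith [hu1]
    have hapos : 0 < a / 2 - τ := by linarith
    have hma : max (a / 2 - τ) 0 = a / 2 - τ := max_eq_left (le_of_lt hapos)
    have hmb : max (b / 2 - τ) 0 = b / 2 - τ := max_eq_left (le_of_lt hbpos)
    rw [hma, hmb] at hτ ⊢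
    have hdiff : (a / 2 - τ) - (b / 2 - τ) = u := by simp [hu]; ring
    have hsum : (a / 2 - τ) + (b / 2 - τ) = 2 * v := by
      have hsq : ((a / 2 - τ) + (b / 2 - τ)) ^ 2 = (2 * v) ^ 2 := by nlinarith
      nlinarith
    constructor
    · have : a / 2 - τ = u / 2 + v := by linarith
      rw [this]
    · have : b / 2 - τ = -u / 2 + v := by linarith
      rw [this]
end
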